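/- arXiv:math/0407097 — 2 statements merged into one kernel-verified Lean document; each statement's English description precedes it below -/
import Mathlib

section
/- In the free group F on generators x_s indexed by nonempty finite sequences of positive integers, the endomorphism σ̂_i defined by x_{j,s} ↦ x_{j,s} for j ∉ {i, i+1}, x_{i,s} ↦ x_i · x_{i+1,s} · x_i⁻¹, x_{i+1,s} ↦ x_{i,s} is an automorphism, and if a reduced word u ends with the letter x_i⁻¹, then the reduced form of σ̂_i(u) also ends with x_i⁻¹. -/
/-- The free group `F_•` on generators `x_s` indexed by nonempty finite sequences
of positive integers; a nonempty sequence is encoded as a (head, tail) pair. -/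
abbrev FG := FreeGroup (ℕ+ × List ℕ+)

/-- The endomorphism `σ̂_i` of `F_•`:
`x_{i,s} ↦ x_i · x_{i+1,s} · x_i⁻¹`, `x_{i+1,s} ↦ x_{i,s}`, and
`x_{j,s} ↦ x_{j,s}` for `j ∉ {i, i+1}`. -/
def sigmaHat (i : ℕ+) : FG →* FG :=
  FreeGroup.lift fun p =>
    if p.1 = i then
      FreeGroup.of (i, ([] : List ℕ+)) * FreeGroup.of (i + 1, p.2) *
        (FreeGroup.of (i, ([] : List ℕ+)))⁻¹
    else if p.1 = i + 1 then FreeGroup.of (i, p.2)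
    else FreeGroup.of p

def tauHat (i : ℕ+) : FG →* FG :=
  FreeGroup.lift fun p =>
    if p.1 = i then FreeGroup.of (i + 1, p.2)
    else if p.1 = i + 1 then
      (FreeGroup.of (i + 1, ([] : List ℕ+)))⁻¹ * FreeGroup.of (i, p.2) *
        FreeGroup.of (i + 1, ([] : List ℕ+))
    else FreeGroup.of p

lemma pnat_ne (i : ℕ+) : i ≠ i + 1 := by
  intro h
  have := congrArg (fun x : ℕ+ => (x : ℕ)) h
  simp at this

lemma pnat_ne' (i : ℕ+) : i + 1 ≠ i := (pnat_ne i).symm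

lemma tau_sigma (i : ℕ+) : (tauHat i).comp (sigmaHat i) = MonoidHom.id FG := by
  apply FreeGroup.ext_hom
  intro p
  obtain ⟨j, s⟩ := p
  simp only [MonoidHom.coe_comp, Function.comp_apply, MonoidHom.id_apply, sigmaHat,
    FreeGroup.lift_apply_of]
  by_cases h1 : j = i
  · subst h1
    simp [tauHat, pnat_ne, pnat_ne', FreeGroup.lift_apply_of]
    group
  · by_cases h2 : j = i + 1
    · subst h2
      simp [h1, tauHat, pnat_ne, pnat_ne', FreeGroup.lift_apply_of]
    · simp [h1, h2, tauHat, FreeGroup.lift_apply_of]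

lemma sigma_tau (i : ℕ+) : (sigmaHat i).comp (tauHat i) = MonoidHom.id FG := by
  apply FreeGroup.ext_hom
  intro p
  obtain ⟨j, s⟩ := p
  simp only [MonoidHom.coe_comp, Function.comp_apply, MonoidHom.id_apply, tauHat,
    FreeGroup.lift_apply_of]
  by_cases h1 : j = i
  · subst h1
    simp [sigmaHat, pnat_ne, pnat_ne', FreeGroup.lift_apply_of]
  · by_cases h2 : j = i + 1
    · subst h2
      simp [h1, sigmaHat, pnat_ne, pnat_ne', FreeGroup.lift_apply_of]
      group
    · simp [h1, h2, sigmaHat, FreeGroup.lift_apply_of]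

lemma sigma_bij (i : ℕ+) : Function.Bijective (sigmaHat i) := by
  have h1 := tau_sigma i
  have h2 := sigma_tau i
  constructor
  · intro a b hab
    have := congrArg (fun f : FG →* FG => f a) h1
    have hb := congrArg (fun f : FG →* FG => f b) h1
    simp only [MonoidHom.coe_comp, Function.comp_apply, MonoidHom.id_apply] at this hb
    rw [← this, ← hb, hab]
  · intro b
    refine ⟨tauHat i b, ?_⟩
    have := congrArg (fun f : FG →* FG => f b) h2
    simpa using this

abbrev Ltr := (ℕ+ × List ℕ+) × Bool

def B (i : ℕ+) (l : Ltr) : List Ltr :=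
  if l.1.1 = i then [((i, []), true), ((i + 1, l.1.2), l.2), ((i, []), false)]
  else if l.1.1 = i + 1 then [((i, l.1.2), l.2)]
  else [l]

lemma B_i (i : ℕ+) (s : List ℕ+) (e : Bool) :
    B i ((i, s), e) = [((i, []), true), ((i + 1, s), e), ((i, []), false)] := by simp [B]

lemma B_i1 (i : ℕ+) (s : List ℕ+) (e : Bool) :
    B i ((i + 1, s), e) = [((i, s), e)] := by simp [B, pnat_ne' i]

lemma B_out (i j : ℕ+) (s : List ℕ+) (e : Bool) (h1 : j ≠ i) (h2 : j ≠ i + 1) :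
    B i ((j, s), e) = [((j, s), e)] := by simp [B, h1, h2]

def stp (a : Ltr) (l : List Ltr) : List Ltr :=
  match l with
  | [] => [a]
  | h :: t => if a.1 = h.1 ∧ a.2 = not h.2 then t else a :: h :: t

lemma stp_MP (i : ℕ+) (l : List Ltr) :
    stp ((i, ([] : List ℕ+)), false) (((i, ([] : List ℕ+)), true) :: l) = l := by
  simp [stp]

lemma reduce_cons' (a : Ltr) (l : List Ltr) :
    FreeGroup.reduce (a :: l) = stp a (FreeGroup.reduce l) := by
  rw [FreeGroup.reduce.cons]
  cases h : FreeGroup.reduce l with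
  | nil => rfl
  | cons hd tl => rfl

lemma stp_nil (a : Ltr) : stp a [] = [a] := rfl

lemma stp_pos {a b : Ltr} (l : List Ltr) (h1 : a.1 = b.1) (h2 : a.2 = !b.2) :
    stp a (b :: l) = l := by
  simp only [stp]
  rw [if_pos ⟨h1, h2⟩]

lemma stp_neg {a b : Ltr} (l : List Ltr) (h : ¬(a.1 = b.1 ∧ a.2 = !b.2)) :
    stp a (b :: l) = a :: b :: l := by
  simp only [stp]
  rw [if_neg h]

lemma stp_ne_fst {a b : Ltr} (l : List Ltr) (h : a.1.1 ≠ b.1.1) :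
    stp a (b :: l) = a :: b :: l :=
  stp_neg l (fun hh => h (by rw [hh.1]))

lemma reduced_of_cons {a : Ltr} {l : List Ltr}
    (h : FreeGroup.reduce (a :: l) = a :: l) : FreeGroup.reduce l = l := by
  rw [reduce_cons'] at h
  cases hr : FreeGroup.reduce l with
  | nil =>
    rw [hr, stp_nil] at h
    cases h
    exact hr
  | cons b r =>
    rw [hr] at h
    by_cases hc : a.1 = b.1 ∧ a.2 = !b.2
    · rw [stp_pos r hc.1 hc.2] at h
      exfalso
      have hlen : (FreeGroup.reduce l).length ≤ l.length :=
        (FreeGroup.reduce.red).length_le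
      rw [hr, h] at hlen
      simp at hlen
    · rw [stp_neg r hc] at h
      have := (List.cons.injEq _ _ _ _).mp h
      exact this.2

lemma reduced_nonadj {a b : Ltr} {l : List Ltr}
    (h : FreeGroup.reduce (a :: b :: l) = a :: b :: l) : ¬(a.1 = b.1 ∧ a.2 = !b.2) := by
  intro hc
  have hbl : FreeGroup.reduce (b :: l) = b :: l := reduced_of_cons h
  rw [reduce_cons', hbl, stp_pos l hc.1 hc.2] at h
  have := congrArg List.length h
  simp at this
  omega

lemma head?_some {l : List Ltr} {a : Ltr} (h : l.head? = some a) : l = a :: l.tail := by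
  cases l <;> simp_all

lemma take2_some {l : List Ltr} {a b : Ltr} (h : l.take 2 = [a, b]) :
    l = a :: b :: l.drop 2 := by
  cases l with
  | nil => simp at h
  | cons x t =>
    cases t with
    | nil => simp at h
    | cons y r =>
      simp only [List.take] at h
      obtain ⟨h1, h2⟩ := by simpa using h
      simp [h1, h2]

lemma xiM_cancel {i : ℕ+} {r : List ℕ+} {d : Bool}
    (hh : (((i, ([] : List ℕ+)), false) : Ltr).1 = (((i, r), d) : Ltr).1 ∧ false = !d) :
    r = [] ∧ d = true :=
  ⟨(((Prod.mk.injEq _ _ _ _).mp hh.1).2).symm, by cases d <;> simp_all⟩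

def Spec (i : ℕ+) : List Ltr → List Ltr → Prop
  | [], W => W = []
  | l :: t, W =>
    if l.1.1 = i then W.take 2 = [((i, ([] : List ℕ+)), true), ((i + 1, l.1.2), l.2)]
    else if l.1.1 = i + 1 then
      W.head? = some ((i, l.1.2), l.2) ∨
      (l.1.2 = [] ∧ l.2 = false ∧ ∃ p t₂, t = p :: t₂ ∧ p.1.1 = i ∧
        W.head? = some ((i + 1, p.1.2), p.2))
    else W.head? = some l

lemma Spec_cons (i : ℕ+) (l : Ltr) (t W : List Ltr) :
    Spec i (l :: t) W ↔
      (if l.1.1 = i then W.take 2 = [((i, ([] : List ℕ+)), true), ((i + 1, l.1.2), l.2)]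
      else if l.1.1 = i + 1 then
        W.head? = some ((i, l.1.2), l.2) ∨
        (l.1.2 = [] ∧ l.2 = false ∧ ∃ p t₂, t = p :: t₂ ∧ p.1.1 = i ∧
          W.head? = some ((i + 1, p.1.2), p.2))
      else W.head? = some l) := Iff.rfl

lemma main (i : ℕ+) : ∀ (n : ℕ) (w : List Ltr), w.length ≤ n → FreeGroup.reduce w = w →
    Spec i w (FreeGroup.reduce (w.flatMap (B i))) := by
  intro n
  induction n with
  | zero =>
    intro w hw _
    have hnil : w = [] := by
      cases w
      · rfl
      · simp at hw
    subst hnil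
    exact rfl
  | succ n IH =>
    intro w hw hred
    rcases w with _ | ⟨⟨⟨j, s⟩, e⟩, t⟩
    · exact rfl
    · have hredt : FreeGroup.reduce t = t := reduced_of_cons hred
      have hlt : t.length ≤ n := by simp at hw; omega
      have hSt := IH t hlt hredt
      by_cases hj1 : j = i
      · subst j
        have hW : FreeGroup.reduce ((((i, s), e) :: t).flatMap (B i)) =
            stp ((i, []), true) (stp ((i + 1, s), e) (stp ((i, []), false)
              (FreeGroup.reduce (t.flatMap (B i))))) := by
          rw [List.flatMap_cons, B_i]
          simp only [List.cons_append, List.nil_append]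
          rw [reduce_cons', reduce_cons', reduce_cons']
        rw [Spec_cons, hW, if_pos (rfl : ((((i, s), e) : Ltr)).1.1 = i)]
        rcases t with _ | ⟨⟨⟨k, r⟩, d⟩, t'⟩
        · rw [show FreeGroup.reduce (([] : List Ltr).flatMap (B i)) = [] from rfl]
          rw [stp_nil, stp_ne_fst _ (pnat_ne' i), stp_ne_fst _ (pnat_ne i)]
          rfl
        · have hnadj : ¬((((i, s), e) : Ltr).1 = (((k, r), d) : Ltr).1 ∧ e = !d) :=
            reduced_nonadj hred
          by_cases hk1 : k = i
          · subst k
            rw [Spec_cons, if_pos (rfl : ((((i, r), d) : Ltr)).1.1 = i)] at hSt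
            have hT := take2_some hSt
            rw [hT, stp_MP i _]
            rw [stp_neg _ (fun hh => hnadj ⟨by
              have hsr : s = r := congrArg Prod.snd hh.1
              rw [hsr], hh.2⟩)]
            rw [stp_ne_fst _ (pnat_ne i)]
            rfl
          · by_cases hk2 : k = i + 1
            · subst hk2
              have hredt' := reduced_of_cons hredt
              have hlt' : t'.length ≤ n := by simp at hw; omega
              have hSt' := IH t' hlt' hredt'
              have hT : FreeGroup.reduce ((((i + 1, r), d) :: t').flatMap (B i)) =
                  stp ((i, r), d) (FreeGroup.reduce (t'.flatMap (B i))) := by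
                rw [List.flatMap_cons, B_i1]
                simp only [List.cons_append, List.nil_append]
                rw [reduce_cons']
              rw [hT]
              rcases t' with _ | ⟨⟨⟨k', r'⟩, d'⟩, t''⟩
              · rw [show FreeGroup.reduce (([] : List Ltr).flatMap (B i)) = [] from rfl]
                rw [stp_nil]
                by_cases hc : r = ([] : List ℕ+) ∧ d = true
                · obtain ⟨rfl, rfl⟩ := hc
                  rw [stp_MP i _, stp_nil, stp_ne_fst _ (pnat_ne i)]
                  rfl
                · rw [stp_neg _ (fun hh => hc (xiM_cancel hh))]
                  rw [stp_ne_fst _ (pnat_ne' i), stp_ne_fst _ (pnat_ne i)]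
                  rfl
              · have hnadj2 : ¬((((i + 1, r), d) : Ltr).1 = (((k', r'), d') : Ltr).1 ∧
                    d = !d') := reduced_nonadj hredt
                by_cases hk'1 : k' = i
                · subst k'
                  rw [Spec_cons, if_pos (rfl : ((((i, r'), d') : Ltr)).1.1 = i)] at hSt'
                  have hT' := take2_some hSt'
                  rw [hT']
                  by_cases hc : r = ([] : List ℕ+) ∧ d = false
                  · obtain ⟨rfl, rfl⟩ := hc
                    rw [stp_MP i _]
                    rw [stp_ne_fst _ (pnat_ne i), stp_ne_fst _ (pnat_ne' i),
                      stp_ne_fst _ (pnat_ne i)]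
                    rfl
                  · rw [stp_neg _ (fun hh => hc ⟨((Prod.mk.injEq _ _ _ _).mp hh.1).2,
                      by simpa using hh.2⟩)]
                    by_cases hc2 : r = ([] : List ℕ+) ∧ d = true
                    · obtain ⟨rfl, rfl⟩ := hc2
                      rw [stp_MP i _]
                      rw [stp_ne_fst _ (pnat_ne' i), stp_ne_fst _ (pnat_ne i)]
                      rfl
                    · rw [stp_neg _ (fun hh => hc2 (xiM_cancel hh))]
                      rw [stp_ne_fst _ (pnat_ne' i), stp_ne_fst _ (pnat_ne i)]
                      rfl
                · by_cases hk'2 : k' = i + 1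
                  · subst hk'2
                    rw [Spec_cons, if_neg (pnat_ne' i),
                      if_pos (rfl : ((((i + 1, r'), d') : Ltr)).1.1 = i + 1)] at hSt'
                    rcases hSt' with hL | ⟨hr', hd', p, t₃, ht'', hp, hHd⟩
                    · have hT' := head?_some hL
                      rw [hT']
                      rw [stp_neg _ (fun hh => hnadj2 ⟨by
                        have hsr : r = r' := congrArg Prod.snd hh.1
                        rw [hsr], hh.2⟩)]
                      by_cases hc : r = ([] : List ℕ+) ∧ d = true
                      · obtain ⟨rfl, rfl⟩ := hc
                        rw [stp_MP i _]
                        rw [stp_ne_fst _ (pnat_ne' i), stp_ne_fst _ (pnat_ne i)]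
                        rfl
                      · rw [stp_neg _ (fun hh => hc (xiM_cancel hh))]
                        rw [stp_ne_fst _ (pnat_ne' i), stp_ne_fst _ (pnat_ne i)]
                        rfl
                    · have hT' := head?_some hHd
                      have hr2 : r' = [] := hr'
                      have hd2 : d' = false := hd'
                      subst hr2; subst hd2
                      rw [hT']
                      rw [stp_ne_fst _ (pnat_ne i)]
                      rw [stp_neg _ (fun hh => by
                        obtain ⟨h1, h2⟩ := xiM_cancel hh
                        exact hnadj2 ⟨by rw [h1], by rw [h2]; rfl⟩)]
                      rw [stp_ne_fst _ (pnat_ne' i), stp_ne_fst _ (pnat_ne i)]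
                      rfl
                  · rw [Spec_cons, if_neg hk'1, if_neg hk'2] at hSt'
                    have hT' := head?_some hSt'
                    rw [hT']
                    rw [stp_ne_fst _ (fun hh => hk'1 hh.symm)]
                    by_cases hc : r = ([] : List ℕ+) ∧ d = true
                    · obtain ⟨rfl, rfl⟩ := hc
                      rw [stp_MP i _]
                      rw [stp_ne_fst _ (fun hh => hk'2 hh.symm), stp_ne_fst _ (pnat_ne i)]
                      rfl
                    · rw [stp_neg _ (fun hh => hc (xiM_cancel hh))]
                      rw [stp_ne_fst _ (pnat_ne' i), stp_ne_fst _ (pnat_ne i)]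
                      rfl
            · rw [Spec_cons, if_neg hk1, if_neg hk2] at hSt
              have hT := head?_some hSt
              rw [hT]
              rw [stp_ne_fst _ (fun hh => hk1 hh.symm)]
              rw [stp_ne_fst _ (pnat_ne' i), stp_ne_fst _ (pnat_ne i)]
              rfl
      · by_cases hj2 : j = i + 1
        · subst hj2
          have hW : FreeGroup.reduce ((((i + 1, s), e) :: t).flatMap (B i)) =
              stp ((i, s), e) (FreeGroup.reduce (t.flatMap (B i))) := by
            rw [List.flatMap_cons, B_i1]
            simp only [List.cons_append, List.nil_append]
            rw [reduce_cons']
          rw [Spec_cons, hW, if_neg (pnat_ne' i),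
            if_pos (rfl : ((((i + 1, s), e) : Ltr)).1.1 = i + 1)]
          rcases t with _ | ⟨⟨⟨k, r⟩, d⟩, t'⟩
          · rw [show FreeGroup.reduce (([] : List Ltr).flatMap (B i)) = [] from rfl, stp_nil]
            left; rfl
          · have hnadj : ¬((((i + 1, s), e) : Ltr).1 = (((k, r), d) : Ltr).1 ∧ e = !d) :=
              reduced_nonadj hred
            by_cases hk1 : k = i
            · subst k
              rw [Spec_cons, if_pos (rfl : ((((i, r), d) : Ltr)).1.1 = i)] at hSt
              have hT := take2_some hSt
              rw [hT]
              by_cases hc : s = ([] : List ℕ+) ∧ e = false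
              · obtain ⟨rfl, rfl⟩ := hc
                rw [stp_MP i _]
                right
                exact ⟨rfl, rfl, ((i, r), d), t', rfl, rfl, rfl⟩
              · rw [stp_neg _ (fun hh => hc ⟨((Prod.mk.injEq _ _ _ _).mp hh.1).2,
                  by simpa using hh.2⟩)]
                left; rfl
            · by_cases hk2 : k = i + 1
              · subst hk2
                rw [Spec_cons, if_neg (pnat_ne' i),
                  if_pos (rfl : ((((i + 1, r), d) : Ltr)).1.1 = i + 1)] at hSt
                rcases hSt with hL | ⟨hr', hd', p, t₂, ht₂, hp, hHd⟩
                · have hT := head?_some hL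
                  rw [hT]
                  rw [stp_neg _ (fun hh => hnadj ⟨by
                    have hsr : s = r := congrArg Prod.snd hh.1
                    rw [hsr], hh.2⟩)]
                  left; rfl
                · have hT := head?_some hHd
                  rw [hT]
                  rw [stp_ne_fst _ (pnat_ne i)]
                  left; rfl
              · rw [Spec_cons, if_neg hk1, if_neg hk2] at hSt
                have hT := head?_some hSt
                rw [hT]
                rw [stp_ne_fst _ (fun hh => hk1 hh.symm)]
                left; rfl
        · have hW : FreeGroup.reduce ((((j, s), e) :: t).flatMap (B i)) =
              stp ((j, s), e) (FreeGroup.reduce (t.flatMap (B i))) := by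
            rw [List.flatMap_cons, B_out i j s e hj1 hj2]
            simp only [List.cons_append, List.nil_append]
            rw [reduce_cons']
          rw [Spec_cons, hW, if_neg hj1, if_neg hj2]
          rcases t with _ | ⟨⟨⟨k, r⟩, d⟩, t'⟩
          · rw [show FreeGroup.reduce (([] : List Ltr).flatMap (B i)) = [] from rfl, stp_nil]
            rfl
          · have hnadj : ¬((((j, s), e) : Ltr).1 = (((k, r), d) : Ltr).1 ∧ e = !d) :=
              reduced_nonadj hred
            by_cases hk1 : k = i
            · subst k
              rw [Spec_cons, if_pos (rfl : ((((i, r), d) : Ltr)).1.1 = i)] at hSt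
              have hT := take2_some hSt
              rw [hT]
              rw [stp_ne_fst _ hj1]
              rfl
            · by_cases hk2 : k = i + 1
              · subst hk2
                rw [Spec_cons, if_neg (pnat_ne' i),
                  if_pos (rfl : ((((i + 1, r), d) : Ltr)).1.1 = i + 1)] at hSt
                rcases hSt with hL | ⟨hr', hd', p, t₂, ht₂, hp, hHd⟩
                · have hT := head?_some hL
                  rw [hT]
                  rw [stp_ne_fst _ hj1]
                  rfl
                · have hT := head?_some hHd
                  rw [hT]
                  rw [stp_ne_fst _ hj2]
                  rfl
              · rw [Spec_cons, if_neg hk1, if_neg hk2] at hSt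
                have hT := head?_some hSt
                rw [hT]
                rw [stp_neg _ hnadj]
                rfl

lemma phi_mk (i : ℕ+) (w : List Ltr) :
    sigmaHat i (FreeGroup.mk w) = FreeGroup.mk (w.flatMap (B i)) := by
  induction w with
  | nil => simp [← FreeGroup.one_eq_mk]
  | cons l t ih =>
    have : FreeGroup.mk (l :: t) = FreeGroup.mk [l] * FreeGroup.mk t := by
      rw [FreeGroup.mul_mk]; rfl
    rw [this, map_mul, ih, List.flatMap_cons, ← FreeGroup.mul_mk]
    congr 1
    obtain ⟨⟨j, s⟩, b⟩ := l
    cases b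
    · have : FreeGroup.mk [((j, s), false)] = (FreeGroup.of (j, s))⁻¹ := by
        rw [FreeGroup.of, FreeGroup.inv_mk]; rfl
      rw [this, map_inv, sigmaHat, FreeGroup.lift_apply_of, B]
      by_cases h1 : j = i
      · subst j
        simp only [if_pos rfl]
        simp [FreeGroup.of, FreeGroup.inv_mk, FreeGroup.mul_mk, FreeGroup.invRev]
      · by_cases h2 : j = i + 1
        · subst h2
          simp only [if_neg h1, if_pos rfl]
          simp [FreeGroup.of, FreeGroup.inv_mk, FreeGroup.invRev]
        · simp only [if_neg h1, if_neg h2]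
          simp [FreeGroup.of, FreeGroup.inv_mk, FreeGroup.invRev]
    · have : FreeGroup.mk [((j, s), true)] = FreeGroup.of (j, s) := rfl
      rw [this, sigmaHat, FreeGroup.lift_apply_of, B]
      by_cases h1 : j = i
      · subst j
        simp only [if_pos rfl]
        simp [FreeGroup.of, FreeGroup.inv_mk, FreeGroup.mul_mk, FreeGroup.invRev]
      · by_cases h2 : j = i + 1
        · subst h2
          simp only [if_neg h1, if_pos rfl, if_true]
          rfl
        · simp only [if_neg h1, if_neg h2]
          rfl

lemma head_version (i : ℕ+) (u : FreeGroup (ℕ+ × List ℕ+))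
    (hu : u.toWord.head? = some ((i, ([] : List ℕ+)), true)) :
    ((sigmaHat i) u).toWord.head? = some ((i, ([] : List ℕ+)), true) := by
  have hred : FreeGroup.reduce u.toWord = u.toWord := FreeGroup.reduce_toWord u
  have hu' : u = FreeGroup.mk u.toWord := (FreeGroup.mk_toWord).symm
  have hS := main i u.toWord.length u.toWord le_rfl hred
  have hW : ((sigmaHat i) u).toWord = FreeGroup.reduce (u.toWord.flatMap (B i)) := by
    conv_lhs => rw [hu']
    rw [phi_mk, FreeGroup.toWord_mk]
  have hw := head?_some hu
  rw [hw] at hS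
  rw [Spec_cons, if_pos (rfl : ((((i, ([] : List ℕ+)), true) : Ltr)).1.1 = i)] at hS
  have h2 := take2_some hS
  rw [hW, hw, h2]
  rfl

/-- `σ̂_i` is an automorphism of the free group `F_•`, and it maps any reduced
word ending with the letter `x_i⁻¹` to a reduced word ending with `x_i⁻¹`. -/
theorem sigmaHat_bijective_and_preserves_final_inv (i : ℕ+) :
    Function.Bijective (sigmaHat i) ∧
    ∀ u : FG, u.toWord.getLast? = some ((i, ([] : List ℕ+)), false) →
      ((sigmaHat i) u).toWord.getLast? = some ((i, ([] : List ℕ+)), false) := by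
  refine ⟨sigma_bij i, ?_⟩
  intro u hu
  have hv : (u⁻¹).toWord.head? = some ((i, ([] : List ℕ+)), true) := by
    rw [FreeGroup.toWord_inv, FreeGroup.invRev, List.head?_reverse, List.getLast?_map, hu]
    rfl
  have h2 := head_version i u⁻¹ hv
  rw [map_inv, FreeGroup.toWord_inv, FreeGroup.invRev, List.head?_reverse,
    List.getLast?_map] at h2
  cases hl : ((sigmaHat i) u).toWord.getLast? with
  | none => rw [hl] at h2; simp at h2
  | some a =>
    rw [hl] at h2
    obtain ⟨⟨x, sx⟩, b⟩ := a
    simp only [Option.map_some] at h2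
    have h3 := Option.some.inj h2
    have hx : x = i := congrArg (fun q => q.1.1) h3
    have hsx : sx = [] := congrArg (fun q => q.1.2) h3
    have hb : (!b) = true := congrArg (fun q => q.2) h3
    subst hx; subst hsx
    cases b
    · rfl
    · simp at hb
end

section
/- Let G be a group with a submonoid M such that G = M⁻¹M (every element of G is a left fraction over M), M is cancellative, any two elements of M have a left common multiple, and < is a strict linear order on M compatible with left multiplication (x < y implies zx < zy). Define C = { x⁻¹y : x, y ∈ M, x < y }. Then C·C ⊆ C and C ∩ C⁻¹ = ∅; consequently the relation g <' h iff g⁻¹h ∈ C is a strict linear order on G compatible with left multiplication. -/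
/-!
If `x < y` and `z < w` in `M`, choose `u, v ∈ M` with `u y = v z`; then
`x⁻¹y · z⁻¹w = (ux)⁻¹(vw)` and `ux < uy = vz < vw`, so `C` is closed under products.
Irreflexivity gives `1 ∉ C`, hence `C ∩ C⁻¹ = ∅` since `g g⁻¹ = 1`. Every element is a
fraction `x⁻¹y`, so trichotomy on `M` gives `G = C ∪ {1} ∪ C⁻¹`. The order properties
of `g <' h ↔ g⁻¹h ∈ C` are then formal consequences.
-/

section FractionCone

variable {G : Type*} [Group G] (S : Submonoid G) (r : G → G → Prop)

def fractionCone : Set G := {g | ∃ x ∈ S, ∃ y ∈ S, r x y ∧ g = x⁻¹ * y}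

variable {S r}

theorem fractionCone_mul_mem
    (hOre : ∀ x ∈ S, ∀ y ∈ S, ∃ u ∈ S, ∃ v ∈ S, u * x = v * y)
    (htrans : ∀ x ∈ S, ∀ y ∈ S, ∀ z ∈ S, r x y → r y z → r x z)
    (hcompat : ∀ z ∈ S, ∀ x ∈ S, ∀ y ∈ S, r x y → r (z * x) (z * y))
    {g h : G} (hg : g ∈ fractionCone S r) (hh : h ∈ fractionCone S r) :
    g * h ∈ fractionCone S r := by
  obtain ⟨x, hx, y, hy, hxy, rfl⟩ := hg
  obtain ⟨z, hz, w, hw, hzw, rfl⟩ := hh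
  obtain ⟨u, hu, v, hv, huv⟩ := hOre y hy z hz
  have hlt : r (u * x) (v * w) := by
    refine htrans _ (mul_mem hu hx) _ (mul_mem hu hy) _ (mul_mem hv hw)
      (hcompat u hu x hx y hy hxy) ?_
    rw [huv]
    exact hcompat v hv z hz w hw hzw
  refine ⟨u * x, mul_mem hu hx, v * w, mul_mem hv hw, hlt, ?_⟩
  calc x⁻¹ * y * (z⁻¹ * w) = (u * x)⁻¹ * (u * y * z⁻¹ * w) := by group
    _ = (u * x)⁻¹ * (v * w) := by rw [huv]; group

theorem one_notMem_fractionCone (hirr : ∀ x ∈ S, ¬ r x x) :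
    (1 : G) ∉ fractionCone S r := by
  rintro ⟨x, hx, y, hy, hxy, hone⟩
  rw [eq_comm, inv_mul_eq_one] at hone
  exact hirr x hx (hone ▸ hxy)

theorem inv_notMem_fractionCone
    (hOre : ∀ x ∈ S, ∀ y ∈ S, ∃ u ∈ S, ∃ v ∈ S, u * x = v * y)
    (hirr : ∀ x ∈ S, ¬ r x x)
    (htrans : ∀ x ∈ S, ∀ y ∈ S, ∀ z ∈ S, r x y → r y z → r x z)
    (hcompat : ∀ z ∈ S, ∀ x ∈ S, ∀ y ∈ S, r x y → r (z * x) (z * y))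
    {g : G} (hg : g ∈ fractionCone S r) : g⁻¹ ∉ fractionCone S r := fun hg' =>
  one_notMem_fractionCone hirr <|
    mul_inv_cancel g ▸ fractionCone_mul_mem hOre htrans hcompat hg hg'

theorem mem_fractionCone_or_eq_one_or_inv_mem
    (hfrac : ∀ g : G, ∃ x ∈ S, ∃ y ∈ S, g = x⁻¹ * y)
    (htri : ∀ x ∈ S, ∀ y ∈ S, r x y ∨ x = y ∨ r y x) (g : G) :
    g ∈ fractionCone S r ∨ g = 1 ∨ g⁻¹ ∈ fractionCone S r := by
  obtain ⟨x, hx, y, hy, rfl⟩ := hfrac g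
  rcases htri x hx y hy with hxy | rfl | hyx
  · exact Or.inl ⟨x, hx, y, hy, hxy, rfl⟩
  · exact Or.inr (Or.inl (inv_mul_cancel x))
  · exact Or.inr (Or.inr ⟨y, hy, x, hx, hyx, by group⟩)

end FractionCone

/-- Ordering a group of fractions: if `G = M⁻¹M` for a submonoid `M` in which any
two elements have a common left multiple, and `<` is a strict linear order on `M`
compatible with left multiplication, then `C = { x⁻¹y : x, y ∈ M, x < y }`
satisfies `C·C ⊆ C` and `C ∩ C⁻¹ = ∅`, and the induced relation
`g <' h ↔ g⁻¹h ∈ C` is a strict linear order on `G` compatible with left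
multiplication. -/
theorem positive_cone_of_ordered_fractions {G : Type*} [Group G] (S : Submonoid G)
    (hfrac : ∀ g : G, ∃ x ∈ S, ∃ y ∈ S, g = x⁻¹ * y)
    (hOre : ∀ x ∈ S, ∀ y ∈ S, ∃ u ∈ S, ∃ v ∈ S, u * x = v * y)
    (r : G → G → Prop)
    (hirr : ∀ x ∈ S, ¬ r x x)
    (htrans : ∀ x ∈ S, ∀ y ∈ S, ∀ z ∈ S, r x y → r y z → r x z)
    (htri : ∀ x ∈ S, ∀ y ∈ S, r x y ∨ x = y ∨ r y x)
    (hcompat : ∀ z ∈ S, ∀ x ∈ S, ∀ y ∈ S, r x y → r (z * x) (z * y)) :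
    let C : Set G := {g | ∃ x ∈ S, ∃ y ∈ S, r x y ∧ g = x⁻¹ * y}
    (∀ g ∈ C, ∀ h ∈ C, g * h ∈ C) ∧
    (∀ g ∈ C, g⁻¹ ∉ C) ∧
    (∀ g : G, g⁻¹ * g ∉ C) ∧
    (∀ g h k : G, g⁻¹ * h ∈ C → h⁻¹ * k ∈ C → g⁻¹ * k ∈ C) ∧
    (∀ g h : G, g⁻¹ * h ∈ C ∨ g = h ∨ h⁻¹ * g ∈ C) ∧
    (∀ k g h : G, g⁻¹ * h ∈ C → (k * g)⁻¹ * (k * h) ∈ C) := by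
  change let C := fractionCone S r; _
  intro C
  have hmul : ∀ g ∈ C, ∀ h ∈ C, g * h ∈ C := fun _ hg _ hh =>
    fractionCone_mul_mem hOre htrans hcompat hg hh
  refine ⟨hmul, fun _ => inv_notMem_fractionCone hOre hirr htrans hcompat, ?_, ?_, ?_, ?_⟩
  · intro g
    rw [inv_mul_cancel]
    exact one_notMem_fractionCone hirr
  · intro g h k hgh hhk
    have := hmul _ hgh _ hhk
    rwa [mul_assoc, mul_inv_cancel_left] at this
  · intro g h
    rcases mem_fractionCone_or_eq_one_or_inv_mem hfrac htri (g⁻¹ * h) with hC | h1 | hC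
    · exact Or.inl hC
    · exact Or.inr (Or.inl (inv_mul_eq_one.mp h1))
    · rw [mul_inv_rev, inv_inv] at hC
      exact Or.inr (Or.inr hC)
  · intro k g h hgh
    rwa [mul_inv_rev, mul_assoc, inv_mul_cancel_left]
end
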